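/- Let g be a positive definite Hermitian n×n complex matrix and X a Hermitian n×n complex matrix. Then C := (1/2) (√g)^{−1} I_g(X) is Hermitian and satisfies √g · C + C · √g = X; moreover C is the unique Hermitian solution of this equation. -/

import Mathlib

open MeasureTheory Complex Matrix
open scoped ComplexOrder

/-- The complex matrix power `A ^ z` of a Hermitian matrix `A`, defined by functional
calculus: apply `fun x => x ^ z` to the eigenvalues of `A` in a unitary eigenbasis.
(Junk value `0` if `A` is not Hermitian.) -/
noncomputable def matCpow {n : ℕ} (A : Matrix (Fin n) (Fin n) ℂ) (z : ℂ) :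
    Matrix (Fin n) (Fin n) ℂ :=
  @dite _ A.IsHermitian (Classical.dec _)
    (fun hA => (hA.eigenvectorUnitary : Matrix (Fin n) (Fin n) ℂ) *
        Matrix.diagonal (fun i => (hA.eigenvalues i : ℂ) ^ z) *
        star (hA.eigenvectorUnitary : Matrix (Fin n) (Fin n) ℂ))
    (fun _ => 0)

/-- The positive semidefinite square root of a positive semidefinite matrix.
(Junk value `0` if `A` is not positive semidefinite.) -/
noncomputable def matSqrt {n : ℕ} (A : Matrix (Fin n) (Fin n) ℂ) :
    Matrix (Fin n) (Fin n) ℂ :=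
  @dite _ A.PosSemidef (Classical.dec _) (fun h => (h.1.eigenvectorUnitary : Matrix (Fin n) (Fin n) ℂ) *
      Matrix.diagonal (fun i => ((Real.sqrt (h.1.eigenvalues i) : ℝ) : ℂ)) *
      star (h.1.eigenvectorUnitary : Matrix (Fin n) (Fin n) ℂ)) (fun _ => 0)

/-- `I_g(X) := ∫_ℝ (√g)^{it+1/2} X (√g)^{-it-1/2} dt / cosh (π t)`, taken entrywise. -/
noncomputable def Ig {n : ℕ} (g X : Matrix (Fin n) (Fin n) ℂ) :
    Matrix (Fin n) (Fin n) ℂ :=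
  Matrix.of fun i j => ∫ t : ℝ,
    (matCpow (matSqrt g) (Complex.I * t + 1 / 2) * X *
      matCpow (matSqrt g) (-(Complex.I * t) - 1 / 2)) i j / (Real.cosh (Real.pi * t) : ℂ)

/-!
Diagonalize `√g = U diag(μ) U*` with `μ > 0` and write `X = U Y U*`. The integrand of `I_g(X)`
is then `U (μ_p^{it+1/2} Y_pq μ_q^{-it-1/2} / cosh πt)_pq U*`, and the Fourier transform
`∫ e^{iat} / cosh(πt) dt = 1 / cosh(a/2)` (the beta integral `B(p, 1-p) = π / sin πp` after the
substitution `x = sigmoid s`) turns this into `I_g(X) = U (2 μ_p Y_pq / (μ_p + μ_q)) U*`.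
Hence `C = U (Y_pq / (μ_p + μ_q)) U*`, which visibly solves `√g C + C √g = X`. Since
`μ_p + μ_q > 0`, the map `B ↦ √g B + B √g` is injective; this gives uniqueness, and, applied
to `Cᴴ`, hermiticity.
-/

section FourierTransformSech

open Real Set

lemma Complex.betaIntegral_one_sub {p : ℂ} (hp : 0 < p.re) (hp' : 0 < (1 - p).re) :
    betaIntegral p (1 - p) = π / sin (π * p) := by
  have h := Gamma_mul_Gamma_eq_betaIntegral hp hp'
  rw [add_sub_cancel, Gamma_one, one_mul] at h
  rw [← h, Gamma_mul_Gamma_one_sub]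

lemma abs_sigmoid_mul_one_sub (s : ℝ) :
    |sigmoid s * (1 - sigmoid s)| = sigmoid s * (1 - sigmoid s) :=
  abs_of_pos (mul_pos (sigmoid_pos s) (sub_pos.mpr (sigmoid_lt_one s)))

lemma integral_Ioo_zero_one_eq_integral_sigmoid {E : Type*} [NormedAddCommGroup E]
    [NormedSpace ℝ E] (f : ℝ → E) :
    ∫ x in Ioo 0 1, f x = ∫ s, (sigmoid s * (1 - sigmoid s)) • f (sigmoid s) := by
  rw [← range_sigmoid, ← image_univ, integral_image_eq_integral_abs_deriv_smul
    MeasurableSet.univ (fun s _ => (hasDerivAt_sigmoid s).hasDerivWithinAt)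
    sigmoid_injective.injOn, setIntegral_univ]
  simp_rw [abs_sigmoid_mul_one_sub]

lemma integrableOn_Ioo_zero_one_iff_integrable_sigmoid {E : Type*} [NormedAddCommGroup E]
    [NormedSpace ℝ E] (f : ℝ → E) :
    IntegrableOn f (Ioo 0 1) ↔
      Integrable fun s => (sigmoid s * (1 - sigmoid s)) • f (sigmoid s) := by
  rw [← range_sigmoid, ← image_univ, integrableOn_image_iff_integrableOn_abs_deriv_smul
    MeasurableSet.univ (fun s _ => (hasDerivAt_sigmoid s).hasDerivWithinAt)
    sigmoid_injective.injOn, integrableOn_univ]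
  simp_rw [abs_sigmoid_mul_one_sub]

lemma sigmoid_smul_betaIntegrand (p : ℂ) (s : ℝ) :
    (sigmoid s * (1 - sigmoid s)) •
        ((sigmoid s : ℂ) ^ (p - 1) * (1 - (sigmoid s : ℂ)) ^ ((1 - p) - 1)) =
      cexp (p * s) / (1 + Real.exp s) := by
  set x := sigmoid s
  set y := 1 - sigmoid s with hy
  have hx0 : 0 < x := sigmoid_pos s
  have hy0 : 0 < y := sub_pos.mpr (sigmoid_lt_one s)
  have hxy : x = Real.exp s * y := by
    rw [hy, ← sigmoid_neg, ← sigmoid_mul_rexp_neg, mul_comm (rexp s), mul_assoc,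
      ← Real.exp_add, neg_add_cancel, Real.exp_zero, mul_one]
  have hy1 : y = (1 + Real.exp s)⁻¹ := by rw [hy, ← sigmoid_neg, sigmoid_def, neg_neg]
  have hlog : Real.log x = s + Real.log y := by
    rw [hxy, Real.log_mul (Real.exp_pos s).ne' hy0.ne', Real.log_exp]
  rw [show (1 : ℂ) - (x : ℂ) = ((y : ℝ) : ℂ) by push_cast [hy]; ring,
    cpow_def_of_ne_zero (ofReal_ne_zero.mpr hx0.ne'),
    cpow_def_of_ne_zero (ofReal_ne_zero.mpr hy0.ne'),
    ← ofReal_log hx0.le, ← ofReal_log hy0.le, hlog, real_smul, ← Complex.exp_add]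
  have hexp : cexp (-(s + Real.log y : ℝ)) = ((x⁻¹ : ℝ) : ℂ) := by
    rw [← ofReal_neg, ← ofReal_exp, Real.exp_neg, Real.exp_add, Real.exp_log hy0, hxy]
  rw [show ((s + Real.log y : ℝ) : ℂ) * (p - 1) + (Real.log y : ℂ) * (1 - p - 1) =
      p * s + -(s + Real.log y : ℝ) by push_cast; ring, Complex.exp_add, hexp, hy1]
  push_cast
  field_simp

lemma integral_cexp_mul_div_one_add_exp {p : ℂ} (hp : 0 < p.re) (hp1 : p.re < 1) :
    Integrable (fun s : ℝ => cexp (p * s) / (1 + Real.exp s)) ∧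
      ∫ s : ℝ, cexp (p * s) / (1 + Real.exp s) = π / sin (π * p) := by
  have hq : 0 < (1 - p).re := by simpa using hp1
  have hsub := funext (sigmoid_smul_betaIntegrand p)
  set f : ℝ → ℂ := fun x => (x : ℂ) ^ (p - 1) * (1 - (x : ℂ)) ^ ((1 - p) - 1)
  refine ⟨?_, ?_⟩
  · rw [← hsub]
    refine (integrableOn_Ioo_zero_one_iff_integrable_sigmoid f).mp ?_
    exact ((intervalIntegrable_iff_integrableOn_Ioc_of_le zero_le_one).mp
      (betaIntegral_convergent hp hq)).mono_set Ioo_subset_Ioc_self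
  · rw [← hsub, ← integral_Ioo_zero_one_eq_integral_sigmoid f,
      ← integral_Ioc_eq_integral_Ioo, ← intervalIntegral.integral_of_le zero_le_one]
    exact betaIntegral_one_sub hp hq

lemma cexp_mul_I_div_cosh_eq (a t : ℝ) :
    cexp (I * a * t) / (Real.cosh (π * t) : ℂ) =
      2 * (cexp ((1 / 2 + (a / (2 * π) : ℝ) * I) * ↑(2 * π * t)) /
        (1 + Real.exp (2 * π * t))) := by
  have hπ : (π : ℂ) ≠ 0 := ofReal_ne_zero.mpr pi_ne_zero
  set u := Real.exp (π * t) with hu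
  have hu0 : 0 < u := Real.exp_pos _
  have hexp :
      cexp ((1 / 2 + (a / (2 * π) : ℝ) * I) * ↑(2 * π * t)) = cexp (I * a * t) * u := by
    rw [hu, ofReal_exp, ← Complex.exp_add]
    congr 1
    push_cast
    field_simp
    ring
  have hsq : Real.exp (2 * π * t) = u ^ 2 := by rw [hu, ← Real.exp_nat_mul]; ring_nf
  rw [hexp, hsq, Real.cosh_eq, Real.exp_neg, ← hu]
  push_cast
  field_simp
  ring

lemma integral_cexp_mul_I_div_cosh (a : ℝ) :
    Integrable (fun t : ℝ => cexp (I * a * t) / (Real.cosh (π * t) : ℂ)) ∧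
      ∫ t : ℝ, cexp (I * a * t) / (Real.cosh (π * t) : ℂ) =
        ((Real.cosh (a / 2) : ℝ) : ℂ)⁻¹ := by
  set p : ℂ := 1 / 2 + (a / (2 * π) : ℝ) * I
  have hπ : (π : ℂ) ≠ 0 := ofReal_ne_zero.mpr pi_ne_zero
  have hp : p.re = 1 / 2 := by simp [p, -ofReal_div]
  obtain ⟨hint, hval⟩ := integral_cexp_mul_div_one_add_exp (p := p) (by rw [hp]; norm_num)
    (by rw [hp]; norm_num)
  have hsin : sin (π * p) = (Real.cosh (a / 2) : ℂ) := by
    rw [show (π : ℂ) * p = π / 2 + (a / 2 : ℝ) * I by push_cast [p]; field_simp,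
      Complex.sin_add, Complex.sin_pi_div_two, Complex.cos_pi_div_two, cos_mul_I, ofReal_cosh]
    ring
  rw [funext (cexp_mul_I_div_cosh_eq a)]
  refine ⟨(hint.comp_mul_left' (by positivity)).const_mul 2, ?_⟩
  rw [integral_const_mul, Measure.integral_comp_mul_left
    (fun s : ℝ => cexp (p * s) / (1 + Real.exp s)), hval, hsin,
    abs_of_pos (by positivity), real_smul]
  push_cast
  field_simp

lemma cpow_mul_cpow_div_cosh_eq {b c : ℝ} (hb : 0 < b) (hc : 0 < c) (t : ℝ) :
    (b : ℂ) ^ (I * t + 1 / 2) * (c : ℂ) ^ (-(I * t) - 1 / 2) / (Real.cosh (π * t) : ℂ) =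
      Real.exp ((Real.log b - Real.log c) / 2) *
        (cexp (I * ↑(Real.log b - Real.log c) * t) / (Real.cosh (π * t) : ℂ)) := by
  rw [cpow_def_of_ne_zero (ofReal_ne_zero.mpr hb.ne'),
    cpow_def_of_ne_zero (ofReal_ne_zero.mpr hc.ne'),
    ← ofReal_log hb.le, ← ofReal_log hc.le, ← Complex.exp_add, ofReal_exp, mul_div_assoc',
    ← Complex.exp_add]
  congr 2
  push_cast
  ring

lemma exp_half_div_cosh_half_log_sub {b c : ℝ} (hb : 0 < b) (hc : 0 < c) :
    Real.exp ((Real.log b - Real.log c) / 2) / Real.cosh ((Real.log b - Real.log c) / 2) =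
      2 * b / (b + c) := by
  set u := Real.exp ((Real.log b - Real.log c) / 2) with hu
  have hu0 : 0 < u := Real.exp_pos _
  have hu2 : u ^ 2 * c = b := by
    rw [hu, ← Real.exp_nat_mul, show ((2 : ℕ) : ℝ) * ((Real.log b - Real.log c) / 2) =
      Real.log b - Real.log c by push_cast; ring, Real.exp_sub, Real.exp_log hb, Real.exp_log hc]
    field_simp
  rw [Real.cosh_eq, Real.exp_neg, ← hu, ← hu2]
  field_simp

lemma integral_cpow_mul_cpow_div_cosh {b c : ℝ} (hb : 0 < b) (hc : 0 < c) :
    Integrable (fun t : ℝ => (b : ℂ) ^ (I * t + 1 / 2) * (c : ℂ) ^ (-(I * t) - 1 / 2) /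
        (Real.cosh (π * t) : ℂ)) ∧
      ∫ t : ℝ, (b : ℂ) ^ (I * t + 1 / 2) * (c : ℂ) ^ (-(I * t) - 1 / 2) /
        (Real.cosh (π * t) : ℂ) = 2 * b / (b + c) := by
  obtain ⟨hint, hval⟩ := integral_cexp_mul_I_div_cosh (Real.log b - Real.log c)
  rw [funext (cpow_mul_cpow_div_cosh_eq hb hc)]
  refine ⟨hint.const_mul _, ?_⟩
  rw [integral_const_mul, hval, ← div_eq_mul_inv, ← ofReal_div,
    exp_half_div_cosh_half_log_sub hb hc]
  norm_num

end FourierTransformSech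

namespace Matrix

open Unitary

variable {ι : Type*} [Fintype ι] [DecidableEq ι] {A : Matrix ι ι ℂ}

/-- In an eigenbasis of `A` the equation `A B + B A = X` reads `(μ_p + μ_q) B_pq = X_pq`. -/
noncomputable def IsHermitian.sylvesterSolution (hA : A.IsHermitian) (X : Matrix ι ι ℂ) :
    Matrix ι ι ℂ :=
  conjStarAlgAut ℂ _ hA.eigenvectorUnitary <| of fun p q =>
    (conjStarAlgAut ℂ _ hA.eigenvectorUnitary).symm X p q / (hA.eigenvalues p + hA.eigenvalues q)

lemma IsHermitian.mul_conj_add_conj_mul (hA : A.IsHermitian) (M : Matrix ι ι ℂ) :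
    A * conjStarAlgAut ℂ _ hA.eigenvectorUnitary M +
        conjStarAlgAut ℂ _ hA.eigenvectorUnitary M * A =
      conjStarAlgAut ℂ _ hA.eigenvectorUnitary
        (of fun p q => (hA.eigenvalues p + hA.eigenvalues q : ℂ) * M p q) := by
  set φ := conjStarAlgAut ℂ _ hA.eigenvectorUnitary
  set D : Matrix ι ι ℂ := diagonal (RCLike.ofReal ∘ hA.eigenvalues)
  calc A * φ M + φ M * A = φ D * φ M + φ M * φ D := by rw [← hA.spectral_theorem]
    _ = _ := by
      rw [← map_mul, ← map_mul, ← map_add]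
      congr 1
      ext p q
      simp only [coe_algebraMap, add_apply, diagonal_mul, Function.comp_apply, mul_diagonal,
        of_apply, D]
      ring

lemma PosDef.eigenvalues_add_ne_zero (hA : A.PosDef) (p q : ι) :
    (hA.1.eigenvalues p + hA.1.eigenvalues q : ℂ) ≠ 0 := by
  exact_mod_cast (add_pos (hA.eigenvalues_pos p) (hA.eigenvalues_pos q)).ne'

lemma PosDef.mul_sylvesterSolution_add_sylvesterSolution_mul (hA : A.PosDef)
    (X : Matrix ι ι ℂ) :
    A * hA.1.sylvesterSolution X + hA.1.sylvesterSolution X * A = X := by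
  rw [IsHermitian.sylvesterSolution, hA.1.mul_conj_add_conj_mul]
  conv_rhs => rw [← (conjStarAlgAut ℂ _ hA.1.eigenvectorUnitary).apply_symm_apply X]
  congr 1
  ext p q
  simp only [of_apply]
  field_simp [hA.eigenvalues_add_ne_zero p q]

lemma PosDef.sylvesterSolution_mul_add_mul (hA : A.PosDef) (B : Matrix ι ι ℂ) :
    hA.1.sylvesterSolution (A * B + B * A) = B := by
  set φ := conjStarAlgAut ℂ _ hA.1.eigenvectorUnitary
  obtain ⟨M, rfl⟩ : ∃ M, B = φ M := ⟨φ.symm B, (φ.apply_symm_apply B).symm⟩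
  rw [hA.1.mul_conj_add_conj_mul, IsHermitian.sylvesterSolution, StarAlgEquiv.symm_apply_apply]
  congr 1
  ext p q
  simp only [of_apply]
  field_simp [hA.eigenvalues_add_ne_zero p q]

lemma PosDef.isHermitian_sylvesterSolution (hA : A.PosDef) {X : Matrix ι ι ℂ}
    (hX : X.IsHermitian) :
    (hA.1.sylvesterSolution X).IsHermitian := by
  set C := hA.1.sylvesterSolution X
  have h : (A * C + C * A)ᴴ = Xᴴ := by rw [hA.mul_sylvesterSolution_add_sylvesterSolution_mul X]
  rw [conjTranspose_add, conjTranspose_mul, conjTranspose_mul, hA.1.eq, hX.eq] at h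
  change Cᴴ = C
  rw [← hA.sylvesterSolution_mul_add_mul Cᴴ, add_comm, h]

lemma integral_mul_mul_apply {l m n o : Type*} [Fintype m] [Fintype n] {α : Type*}
    [MeasurableSpace α] {μ : Measure α} (U : Matrix l m ℂ) (F : α → Matrix m n ℂ)
    (V : Matrix n o ℂ) (hF : ∀ p q, Integrable (fun t => F t p q) μ) (i : l) (j : o) :
    ∫ t, (U * F t * V) i j ∂μ = (U * of (fun p q => ∫ t, F t p q ∂μ) * V) i j := by
  simp only [mul_apply, of_apply, Finset.sum_mul]
  rw [integral_finsetSum _ fun q _ => integrable_finsetSum _ fun p _ =>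
    ((hF p q).const_mul _).mul_const _]
  refine Finset.sum_congr rfl fun q _ => ?_
  rw [integral_finsetSum _ fun p _ => ((hF p q).const_mul _).mul_const _]
  refine Finset.sum_congr rfl fun p _ => ?_
  rw [integral_mul_const, integral_const_mul]

end Matrix

lemma matSqrt_posDef {n : ℕ} {g : Matrix (Fin n) (Fin n) ℂ} (hg : g.PosDef) :
    (matSqrt g).PosDef := by
  rw [matSqrt, dif_pos hg.posSemidef]
  exact (IsUnit.posDef_star_right_conjugate_iff Unitary.isUnit_coe).mpr
    (PosDef.diagonal fun i => zero_lt_real.mpr (Real.sqrt_pos.mpr (hg.eigenvalues_pos i)))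

lemma Matrix.IsHermitian.matCpow_eq {n : ℕ} {A : Matrix (Fin n) (Fin n) ℂ} (hA : A.IsHermitian)
    (z : ℂ) : matCpow A z = Unitary.conjStarAlgAut ℂ _ hA.eigenvectorUnitary
      (diagonal fun i => (hA.eigenvalues i : ℂ) ^ z) := by
  rw [matCpow, dif_pos hA, Unitary.conjStarAlgAut_apply]

open Real in
lemma Ig_eq_two_smul_mul_sylvesterSolution {n : ℕ} {g : Matrix (Fin n) (Fin n) ℂ}
    (hS : (matSqrt g).PosDef) (X : Matrix (Fin n) (Fin n) ℂ) :
    Ig g X = (2 : ℂ) • (matSqrt g * hS.1.sylvesterSolution X) := by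
  set φ := Unitary.conjStarAlgAut ℂ _ hS.1.eigenvectorUnitary
  set μ := hS.1.eigenvalues
  obtain ⟨Y, rfl⟩ : ∃ Y, X = φ Y := ⟨φ.symm X, (φ.apply_symm_apply X).symm⟩
  set f : Fin n → Fin n → ℝ → ℂ := fun p q t =>
    (μ p : ℂ) ^ (I * t + 1 / 2) * (μ q : ℂ) ^ (-(I * t) - 1 / 2) / (Real.cosh (π * t) : ℂ)
  have hf : ∀ p q, Integrable (f p q) ∧ ∫ t, f p q t = 2 * μ p / (μ p + μ q) := fun p q =>
    integral_cpow_mul_cpow_div_cosh (hS.eigenvalues_pos p) (hS.eigenvalues_pos q)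
  have hint : ∀ (t : ℝ) i j, (matCpow (matSqrt g) (I * t + 1 / 2) * φ Y *
      matCpow (matSqrt g) (-(I * t) - 1 / 2)) i j / (Real.cosh (π * t) : ℂ) =
      (φ (of fun p q => Y p q * f p q t)) i j := by
    intro t i j
    rw [hS.1.matCpow_eq, hS.1.matCpow_eq, ← map_mul, ← map_mul, div_eq_inv_mul, ← smul_eq_mul,
      ← Matrix.smul_apply, ← map_smul]
    refine congrArg (fun M => φ M i j) ?_
    ext p q
    simp only [ofReal_cosh, ofReal_mul, one_div, Matrix.smul_apply, mul_diagonal, diagonal_mul,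
      smul_eq_mul, of_apply, f]
    ring
  have hIg : Ig g (φ Y) = φ (of fun p q => Y p q * (2 * μ p / (μ p + μ q))) := by
    ext i j
    simp only [Ig, of_apply, hint]
    simp only [φ, Unitary.conjStarAlgAut_apply]
    rw [integral_mul_mul_apply _ (fun t => of fun p q => Y p q * f p q t) _
      fun p q => (hf p q).1.const_mul (Y p q)]
    simp only [of_apply, integral_const_mul, (hf _ _).2]
  set D : Matrix (Fin n) (Fin n) ℂ := diagonal (RCLike.ofReal ∘ μ)
  have hSD : matSqrt g = φ D := hS.1.spectral_theorem
  calc Ig g (φ Y) = φ (of fun p q => Y p q * (2 * μ p / (μ p + μ q))) := hIg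
    _ = (2 : ℂ) • (φ D * φ (of fun p q => Y p q / (μ p + μ q))) := by
      rw [← map_mul, ← map_smul]
      congr 1
      ext p q
      simp only [of_apply, coe_algebraMap, Matrix.smul_apply, diagonal_mul, Function.comp_apply,
        smul_eq_mul, D]
      field_simp [hS.eigenvalues_add_ne_zero p q]
    _ = _ := by rw [← hSD, IsHermitian.sylvesterSolution, StarAlgEquiv.symm_apply_apply]

/-- For `g` positive definite Hermitian and `X` Hermitian,
`C := (1/2) (√g)⁻¹ I_g(X)` is Hermitian, satisfies `√g C + C √g = X`, and is the
unique Hermitian solution of this equation. -/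
theorem sqrt_sylvester_solution {n : ℕ} (g X : Matrix (Fin n) (Fin n) ℂ)
    (hg : g.PosDef) (hX : X.IsHermitian)
    (C : Matrix (Fin n) (Fin n) ℂ)
    (hC : C = (1 / 2 : ℂ) • ((matSqrt g)⁻¹ * Ig g X)) :
    C.IsHermitian ∧ matSqrt g * C + C * matSqrt g = X ∧
      ∀ C' : Matrix (Fin n) (Fin n) ℂ, C'.IsHermitian →
        matSqrt g * C' + C' * matSqrt g = X → C' = C := by
  have hS := matSqrt_posDef hg
  have hCsol : C = hS.1.sylvesterSolution X := by
    rw [hC, Ig_eq_two_smul_mul_sylvesterSolution hS, Matrix.mul_smul, smul_smul,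
      nonsing_inv_mul_cancel_left _ _ ((isUnit_iff_isUnit_det _).mp hS.isUnit)]
    norm_num
  subst hCsol
  refine ⟨hS.isHermitian_sylvesterSolution hX,
    hS.mul_sylvesterSolution_add_sylvesterSolution_mul X, fun C' _ hC' => ?_⟩
  rw [← hC', hS.sylvesterSolution_mul_add_mul]
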